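/- Let h(x_t) be a continuous stochastic process with h(x_0) > 0, and suppose B_t := 1/α(h(x_t)) (for a class-K∞ function α) is a nonnegative supermartingale. Then P(inf_t h(x_t) ≤ 0) ≤ lim_{λ→∞} B_0/λ = 0, i.e., the process stays in the safe set {h > 0} with probability 1. -/

import Mathlib

open MeasureTheory
open scoped NNReal

def ClassKInf (α : ℝ → ℝ) : Prop :=
  ContinuousOn α (Set.Ici 0) ∧ StrictMonoOn α (Set.Ici 0) ∧ α 0 = 0 ∧
    (∀ r ∈ Set.Ici (0 : ℝ), 0 ≤ α r) ∧ Filter.Tendsto α Filter.atTop Filter.atTop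

lemma supermart_maximal {Ω : Type*} {m0 : MeasurableSpace Ω} {μ : Measure Ω}
    [IsProbabilityMeasure μ] {𝒢 : Filtration ℕ m0} {f : ℕ → Ω → ℝ}
    (hf : Supermartingale f 𝒢 μ) (hnn : ∀ i ω, 0 ≤ f i ω) {ε : ℝ} (hε : 0 < ε) (n : ℕ) :
    μ {ω | ∃ k ≤ n, ε ≤ f k ω} ≤ ENNReal.ofReal ((∫ ω, f 0 ω ∂μ) / ε) := by
  classical
  set τ : Ω → ℕ∞ := fun ω => ((hittingBtwn f (Set.Ici ε) 0 n ω : ℕ) : ℕ∞) with hτdef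
  have hτ : IsStoppingTime 𝒢 τ := hf.stronglyAdapted.adapted.isStoppingTime_hittingBtwn measurableSet_Ici
  have hτle : ∀ ω, τ ω ≤ n := fun ω => ENat.coe_le_coe.mpr (hittingBtwn_le ω)
  set A := {ω | ∃ k ≤ n, ε ≤ f k ω} with hAdef
  have hA : MeasurableSet A := by
    have : A = ⋃ k, ⋃ _ : k ≤ n, {ω | ε ≤ f k ω} := by
      ext ω; simp [hAdef]
    rw [this]
    exact MeasurableSet.iUnion fun k => MeasurableSet.iUnion fun _ =>
      measurableSet_le measurable_const
        ((hf.stronglyMeasurable k).measurable.le (𝒢.le k))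
  have hint : Integrable (stoppedValue f τ) μ :=
    integrable_stoppedValue ℕ hτ hf.integrable hτle
  have key : ∀ ω ∈ A, ε ≤ stoppedValue f τ ω := by
    intro ω hω
    obtain ⟨k, hk, hεk⟩ := hω
    exact stoppedValue_hittingBtwn_mem ⟨k, ⟨Nat.zero_le _, hk⟩, hεk⟩
  have step1 : ε * (μ A).toReal ≤ ∫ ω in A, stoppedValue f τ ω ∂μ :=
    by have := setIntegral_ge_of_const_le hA (measure_ne_top μ A) key hint.integrableOn; rwa [smul_eq_mul, mul_comm, Measure.real] at this
  have step2 : ∫ ω in A, stoppedValue f τ ω ∂μ ≤ ∫ ω, stoppedValue f τ ω ∂μ :=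
    setIntegral_le_integral hint (Filter.Eventually.of_forall fun ω => hnn _ _)
  have step3 : ∫ ω, stoppedValue f τ ω ∂μ ≤ ∫ ω, f 0 ω ∂μ := by
    have h := hf.neg.expected_stoppedValue_mono (isStoppingTime_const 𝒢 0) hτ
      (fun ω => by simp; exact bot_le) hτle
    rw [stoppedValue_const] at h
    have h1 : stoppedValue (-f) τ = fun ω => -(stoppedValue f τ ω) := by
      ext ω; simp [stoppedValue]
    rw [h1] at h
    simp only [Pi.neg_apply, integral_neg, neg_le_neg_iff] at h
    exact h
  have hfinal : (μ A).toReal ≤ (∫ ω, f 0 ω ∂μ) / ε := by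
    rw [le_div_iff₀ hε, mul_comm]
    exact step1.trans (step2.trans step3)
  calc μ A = ENNReal.ofReal ((μ A).toReal) := (ENNReal.ofReal_toReal (measure_ne_top μ A)).symm
    _ ≤ _ := ENNReal.ofReal_le_ofReal hfinal

lemma supermart_comp {Ω : Type*} {m0 : MeasurableSpace Ω} {μ : Measure Ω}
    {ℱ : Filtration ℝ≥0 m0} {M : ℝ≥0 → Ω → ℝ} (hM : Supermartingale M ℱ μ)
    {φ : ℕ → ℝ≥0} (hφ : Monotone φ) :
    Supermartingale (fun i => M (φ i))
      (⟨fun i => ℱ (φ i), fun i j hij => ℱ.mono (hφ hij), fun i => ℱ.le _⟩ : Filtration ℕ m0)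
      μ :=
  ⟨fun i => hM.stronglyAdapted (φ i), fun i j hij => hM.2.1 (φ i) (φ j) (hφ hij),
    fun i => hM.integrable (φ i)⟩

lemma exists_mono_grid (u : ℕ → ℝ≥0) (K : ℕ) :
    ∃ (φ : ℕ → ℝ≥0) (N : ℕ), Monotone φ ∧ φ 0 = 0 ∧ ∀ k ≤ K, ∃ j ≤ N, φ j = u k := by
  classical
  set s : Finset ℝ≥0 := insert 0 ((Finset.range (K + 1)).image u) with hs
  have h0s : (0 : ℝ≥0) ∈ s := Finset.mem_insert_self _ _
  set l : List ℝ≥0 := s.sort (· ≤ ·) with hl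
  have hsorted : l.Pairwise (· ≤ ·) := Finset.pairwise_sort _ _
  have hmem : ∀ a : ℝ≥0, a ∈ l ↔ a ∈ s := fun a => Finset.mem_sort _
  set mx := s.max' ⟨0, h0s⟩ with hmx
  set φ : ℕ → ℝ≥0 := fun j => if h : j < l.length then l.get ⟨j, h⟩ else mx with hφ
  have hlen0 : 0 < l.length := by
    rw [List.length_pos_iff]
    intro hnil
    rw [← hmem 0, hnil] at h0s
    exact absurd h0s List.not_mem_nil
  refine ⟨φ, l.length, ?_, ?_, ?_⟩
  · intro i j hij
    by_cases hj : j < l.length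
    · have hi : i < l.length := lt_of_le_of_lt hij hj
      simp only [hφ, dif_pos hi, dif_pos hj]
      exact hsorted.rel_get_of_le (by exact hij)
    · by_cases hi : i < l.length
      · simp only [hφ, dif_pos hi, dif_neg hj]
        exact Finset.le_max' s _ ((hmem _).mp (l.get_mem _))
      · simp [hφ, dif_neg hi, dif_neg hj]
  · have h0l : (0 : ℝ≥0) ∈ l := (hmem 0).mpr h0s
    obtain ⟨i, hi⟩ := List.mem_iff_get.mp h0l
    have : φ 0 ≤ 0 := by
      simp only [hφ, dif_pos hlen0]
      calc l.get ⟨0, hlen0⟩ ≤ l.get i := hsorted.rel_get_of_le (by exact Nat.zero_le _)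
        _ = 0 := hi
    exact le_antisymm this (zero_le)
  · intro k hk
    have hus : u k ∈ l := (hmem _).mpr <| Finset.mem_insert_of_mem <|
      Finset.mem_image_of_mem u (Finset.mem_range.mpr (Nat.lt_succ_of_le hk))
    obtain ⟨i, hi⟩ := List.mem_iff_get.mp hus
    exact ⟨i, le_of_lt i.isLt, by simpa [hφ, dif_pos i.isLt] using hi⟩

theorem stmt_11 {Ω X : Type*} {m0 : MeasurableSpace Ω} (μ : Measure Ω)
    [IsProbabilityMeasure μ] (ℱ : Filtration ℝ≥0 m0)
    (α : ℝ → ℝ) (hα : ClassKInf α)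
    (x : ℝ≥0 → Ω → X) (h : X → ℝ)
    (hpath : ∀ ω, Continuous fun t => h (x t ω))
    (M : ℝ≥0 → Ω → ℝ) (hM : Supermartingale M ℱ μ)
    (hnonneg : ∀ t ω, 0 ≤ M t ω)
    (hrel : ∀ t ω, (∀ s, s ≤ t → 0 < h (x s ω)) →
      M t ω = 1 / α (h (x t ω)))
    (h₀ : ℝ) (hh₀ : 0 < h₀) (hinit : ∀ ω, h (x 0 ω) = h₀) :
    μ {ω | ∃ t, h (x t ω) ≤ 0} = 0 := by
  obtain ⟨αcont, αmono, α0, αnn, -⟩ := hα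
  set c0 : ℝ := ∫ ω, M 0 ω ∂μ with hc0
  obtain ⟨u, hu⟩ := TopologicalSpace.exists_dense_seq ℝ≥0
  have key : ∀ n : ℕ, μ {ω | ∃ t, h (x t ω) ≤ 0} ≤ ENNReal.ofReal (c0 / (n + 1)) := by
    intro n
    set ε : ℝ := (n : ℝ) + 1 with hεdef
    have hε : 0 < ε := by positivity
    set A := {ω : Ω | ∃ k : ℕ, ε ≤ M (u k) ω} with hA
    -- analysis part: containment
    have hsubset : {ω | ∃ t, h (x t ω) ≤ 0} ⊆ A := by
      rintro ω ⟨t₁, ht₁⟩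
      set g : ℝ≥0 → ℝ := fun t => h (x t ω) with hg
      have hgc : Continuous g := hpath ω
      -- small level c
      obtain ⟨δ, hδ, hδprop⟩ := Metric.continuousWithinAt_iff.mp
        (αcont 0 Set.self_mem_Ici) (1 / ε) (by positivity)
      set c : ℝ := min (δ / 3) (h₀ / 2) with hc0def
      have hc : 0 < c := lt_min (by positivity) (by positivity)
      have hch₀ : c < h₀ := lt_of_le_of_lt (min_le_right _ _) (by linarith)
      have hαsmall : ∀ r : ℝ, 0 ≤ r → r ≤ 2 * c → α r < 1 / ε := by
        intro r hr hrc
        have h1 : r < δ := by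
          have : c ≤ δ / 3 := min_le_left _ _
          linarith
        have := hδprop hr (by simpa [Real.dist_eq, abs_of_nonneg hr] using h1)
        rw [Real.dist_eq, α0, sub_zero] at this
        exact lt_of_le_of_lt (le_abs_self _) this
      -- hitting time of level c
      set S : Set ℝ≥0 := {s | g s ≤ c} with hS
      have hSne : S.Nonempty := ⟨t₁, le_trans ht₁ hc.le⟩
      have hSclosed : IsClosed S := isClosed_Iic.preimage hgc
      set s₀ : ℝ≥0 := sInf S with hs₀
      have hs₀S : s₀ ∈ S := hSclosed.csInf_mem hSne (OrderBot.bddBelow S)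
      have hgs₀ : g s₀ ≤ c := hs₀S
      have hlt : ∀ s, s < s₀ → c < g s := by
        intro s hs
        by_contra hle
        exact absurd (csInf_le (OrderBot.bddBelow S) (not_lt.mp hle)) (not_le.mpr hs)
      have hs₀pos : 0 < s₀ := by
        rcases eq_zero_or_pos s₀ with hp | hp
        · exfalso
          have hgh : g 0 = h₀ := hinit ω
          rw [hp, hgh] at hgs₀
          linarith
        · exact hp
      have hge : c ≤ g s₀ := by
        haveI : (nhdsWithin s₀ (Set.Iio s₀)).NeBot :=
          nhdsWithin_Iio_self_neBot' ⟨0, hs₀pos⟩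
        refine ge_of_tendsto ((hgc.tendsto s₀).mono_left
          (nhdsWithin_le_nhds : nhdsWithin s₀ (Set.Iio s₀) ≤ nhds s₀)) ?_
        exact eventually_nhdsWithin_of_forall fun s hs => (hlt s hs).le
      have hc_all : ∀ s, s ≤ s₀ → c ≤ g s := by
        intro s hs
        rcases lt_or_eq_of_le hs with h' | h'
        · exact (hlt s h').le
        · rw [h']; exact hge
      have hgs₀c : g s₀ = c := le_antisymm hgs₀ hge
      -- continuity of g at s₀
      obtain ⟨δ', hδ', hprop'⟩ := Metric.continuousAt_iff.mp hgc.continuousAt (c / 2)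
        (by positivity)
      set d : ℝ≥0 := Real.toNNReal (δ' / 2) with hd0
      have hd : 0 < d := Real.toNNReal_pos.mpr (by positivity)
      obtain ⟨y, hy₁, hy₂⟩ := exists_between (lt_add_of_pos_right s₀ hd)
      obtain ⟨k, huk⟩ := hu.exists_mem_open isOpen_Ioo ⟨y, hy₁, hy₂⟩
      set t' : ℝ≥0 := u k with ht'
      have hdist : ∀ s : ℝ≥0, s₀ < s → s ≤ t' → dist (g s) (g s₀) < c / 2 := by
        intro s hs₁ hs₂
        refine hprop' ?_
        rw [NNReal.dist_eq]
        have h1 : (s : ℝ) - s₀ ≤ (t' : ℝ) - s₀ := by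
          have := (NNReal.coe_le_coe.mpr hs₂); linarith
        have h2 : (t' : ℝ) < (s₀ : ℝ) + d := by
          have := huk.2
          exact_mod_cast this
        have h3 : (d : ℝ) ≤ δ' / 2 := Real.coe_toNNReal' _ ▸ max_le le_rfl (by positivity)
        have h4 : (s₀ : ℝ) ≤ s := NNReal.coe_le_coe.mpr (le_of_lt hs₁)
        rw [abs_of_nonneg (by linarith)]
        linarith
      have hpos : ∀ s, s ≤ t' → 0 < g s := by
        intro s hs
        rcases le_or_gt s s₀ with h' | h'
        · exact lt_of_lt_of_le hc (hc_all s h')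
        · have := hdist s h' hs
          rw [Real.dist_eq, hgs₀c] at this
          have := abs_lt.mp this
          linarith [this.1]
      have hgt' : g t' < 2 * c := by
        have ht's₀ : s₀ < t' := huk.1
        have := hdist t' ht's₀ le_rfl
        rw [Real.dist_eq, hgs₀c] at this
        have := abs_lt.mp this
        linarith [this.2, hc]
      have hgt'pos : 0 < g t' := hpos t' le_rfl
      have hαlt : α (g t') < 1 / ε := hαsmall _ hgt'pos.le hgt'.le
      have hαpos : 0 < α (g t') := by
        have := αmono Set.self_mem_Ici (Set.mem_Ici.mpr hgt'pos.le) hgt'pos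
        rwa [α0] at this
      have hM' : M t' ω = 1 / α (g t') := hrel t' ω hpos
      refine ⟨k, ?_⟩
      rw [← ht', hM']
      calc ε = 1 / (1 / ε) := (one_div_one_div ε).symm
        _ ≤ 1 / α (g t') := one_div_le_one_div_of_le hαpos hαlt.le
    -- measure bound on A
    have hAbound : μ A ≤ ENNReal.ofReal (c0 / ε) := by
      have hAeq : A = ⋃ K : ℕ, {ω : Ω | ∃ k ≤ K, ε ≤ M (u k) ω} := by
        ext ω
        simp only [hA, Set.mem_setOf_eq, Set.mem_iUnion]
        constructor
        · rintro ⟨k, hk⟩; exact ⟨k, k, le_rfl, hk⟩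
        · rintro ⟨K, k, _, hk⟩; exact ⟨k, hk⟩
      have hBmeas : ∀ K : ℕ, MeasurableSet {ω : Ω | ∃ k ≤ K, ε ≤ M (u k) ω} := by
        intro K
        have : {ω : Ω | ∃ k ≤ K, ε ≤ M (u k) ω} =
            ⋃ k, ⋃ _ : k ≤ K, {ω | ε ≤ M (u k) ω} := by ext ω; simp
        rw [this]
        exact MeasurableSet.iUnion fun k => MeasurableSet.iUnion fun _ =>
          measurableSet_le measurable_const
            ((hM.stronglyAdapted (u k)).measurable.le (ℱ.le (u k)))
      have hmono : Monotone fun K : ℕ => {ω : Ω | ∃ k ≤ K, ε ≤ M (u k) ω} := by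
        intro K₁ K₂ hK ω
        rintro ⟨k, hk, hke⟩
        exact ⟨k, hk.trans hK, hke⟩
      rw [hAeq, hmono.directed_le.measure_iUnion]
      refine iSup_le fun K => ?_
      obtain ⟨φ, N, hφm, hφ0, hφcov⟩ := exists_mono_grid u K
      have hsup := supermart_comp hM hφm
      have hb := supermart_maximal hsup (fun i ω' => hnonneg _ _) hε N
      simp only [hφ0] at hb
      refine le_trans (measure_mono ?_) hb
      rintro ω ⟨k, hk, hke⟩
      obtain ⟨j, hj, hφj⟩ := hφcov k hk
      exact ⟨j, hj, by rw [hφj]; exact hke⟩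
    exact (measure_mono hsubset).trans hAbound
  have htend : Filter.Tendsto (fun n : ℕ => ENNReal.ofReal (c0 / (n + 1)))
      Filter.atTop (nhds 0) := by
    have h1 : Filter.Tendsto (fun n : ℕ => c0 / (n + 1)) Filter.atTop (nhds 0) := by
      apply Filter.Tendsto.div_atTop (tendsto_const_nhds)
      exact Filter.tendsto_atTop_add_const_right _ 1 tendsto_natCast_atTop_atTop
    simpa [Function.comp_def] using (ENNReal.continuous_ofReal.tendsto 0).comp h1
  exact le_antisymm (ge_of_tendsto' htend key) (zero_le)
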